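/- Let n ∈ ℤ and let u be any finite word over {0,1}, with P_n(u) = (M, N). Then there exist Laurent polynomials a, b, c ∈ ℤ[q^{±1}] such that Tr(M) = (q + 1 + q^{-1})·a, Tr(N) = (q + 1 + q^{-1})·b, Tr(M·N) = (q + 1 + q^{-1})·c, and (a, b, c) is a q-Markov triple. -/

import Mathlib

open LaurentPolynomial

namespace QMarkovPaper

/-- Evaluation at `q = 1`: the ring homomorphism `ℤ[q^{±1}] → ℤ` sending `q = T 1` to `1`. -/
noncomputable def ev1 : LaurentPolynomial ℤ →+* ℤ :=
  AddMonoidAlgebra.liftNCRingHom (RingHom.id ℤ) 1 (fun _ _ => Commute.all _ _)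

/-- The `q`-Markov equation
`a² + b² + c² = q⁻¹(q² + q + 1)·a·b·c + (q − 1)(q⁻¹ − 1)` in `ℤ[q^{±1}]`. -/
def qMarkovEq (a b c : LaurentPolynomial ℤ) : Prop :=
  a ^ 2 + b ^ 2 + c ^ 2 =
    T (-1) * (T 2 + T 1 + 1) * (a * b * c) + (T 1 - 1) * (T (-1) - 1)

/-- A `q`-Markov triple: a solution of the `q`-Markov equation whose evaluations
at `q = 1` are positive integers. -/
def qMarkovTriple (a b c : LaurentPolynomial ℤ) : Prop :=
  qMarkovEq a b c ∧ 0 < ev1 a ∧ 0 < ev1 b ∧ 0 < ev1 c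

/-- The `q`-integer `[n]_q = (qⁿ − 1)/(q − 1) ∈ ℤ[q^{±1}]`, for `n : ℤ`. -/
noncomputable def qint : ℤ → LaurentPolynomial ℤ
  | Int.ofNat n => ∑ i ∈ Finset.range n, T (i : ℤ)
  | Int.negSucc n => -∑ i ∈ Finset.range (n + 1), T (-(i + 1) : ℤ)

/-- The `q`-deformed Cohn matrix `A(n)_q`. -/
noncomputable def Aq (n : ℤ) : Matrix (Fin 2) (Fin 2) (LaurentPolynomial ℤ) :=
  !![T (2 - n) * qint n, T (1 - n);
     qint n * qint (3 - n) - T (n - 1), T (-1) * qint (3 - n)]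

/-- The `q`-deformed Cohn matrix `B(n)_q = A(n)_q · A(n+1)_q`. -/
noncomputable def Bq (n : ℤ) : Matrix (Fin 2) (Fin 2) (LaurentPolynomial ℤ) :=
  Aq n * Aq (n + 1)

/-- The pair of `q`-deformed Cohn matrices attached to a vertex of the binary tree,
encoded as a word over `{0,1}` (here `false = 0`, `true = 1`):
`P n [] = (A(n)_q, B(n)_q)`; if `P n u = (M, N)` then `P n (u·0) = (M, M·N)` and
`P n (u·1) = (M·N, N)`. -/
noncomputable def P (n : ℤ) (u : List Bool) :
    Matrix (Fin 2) (Fin 2) (LaurentPolynomial ℤ) ×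
      Matrix (Fin 2) (Fin 2) (LaurentPolynomial ℤ) :=
  u.foldl (fun p b => if b then (p.1 * p.2, p.2) else (p.1, p.1 * p.2)) (Aq n, Bq n)


set_option maxHeartbeats 1000000

theorem ev1_T (k : ℤ) : ev1 (T k) = 1 := by
  rw [ev1, AddMonoidAlgebra.liftNCRingHom]
  show AddMonoidAlgebra.liftNC _ _ (AddMonoidAlgebra.single k 1) = 1
  rw [AddMonoidAlgebra.liftNC_single]
  simp

theorem qsub1_ne : (T 1 - 1 : LaurentPolynomial ℤ) ≠ 0 := by
  intro h
  have h2 : (T 1 - 1 : LaurentPolynomial ℤ).coeff 1 = 0 := by rw [h]; rfl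
  rw [AddMonoidAlgebra.coeff_sub, Finsupp.sub_apply] at h2
  have e1 : (T 1 : LaurentPolynomial ℤ).coeff 1 = 1 := Finsupp.single_eq_same
  have e2 : (1 : LaurentPolynomial ℤ).coeff 1 = 0 := Finsupp.single_eq_of_ne' (by norm_num)
  rw [e1, e2] at h2
  norm_num at h2

theorem qk (m : ℤ) : (T 1 - 1) * qint m = T m - 1 := by
  have tadd : ∀ b : ℤ, (T 1 : LaurentPolynomial ℤ) * T b = T (1 + b) := fun b => (T_add 1 b).symm
  cases m with
  | ofNat n =>
    show (T 1 - 1) * (∑ i ∈ Finset.range n, T (i : ℤ)) = T (n : ℤ) - 1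
    induction n with
    | zero => simp [T_zero]
    | succ k ih =>
      rw [Finset.sum_range_succ, mul_add, ih, sub_mul, one_mul, tadd,
        show (1 + ((k:ℕ):ℤ)) = (((k+1:ℕ):ℤ)) from by push_cast; ring]
      ring
  | negSucc n =>
    show (T 1 - 1) * (-∑ i ∈ Finset.range (n + 1), T (-(i + 1) : ℤ)) = T (Int.negSucc n) - 1
    rw [Int.negSucc_eq]
    induction n with
    | zero =>
      rw [Finset.sum_range_one, mul_neg, sub_mul, one_mul, neg_sub, tadd]
      norm_num [T_zero]
    | succ k ih =>
      rw [Finset.sum_range_succ, neg_add, mul_add, ih, sub_mul, one_mul, mul_neg, tadd,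
        show (1 + -((((k+1):ℕ):ℤ)+1)) = -(((k:ℕ):ℤ)+1) from by push_cast; ring]
      ring

theorem ett : (T 1 : LaurentPolynomial ℤ) * T (-1) = 1 := by
  rw [← T_add]; norm_num [T_zero]

theorem eyz (n : ℤ) : (T n : LaurentPolynomial ℤ) * T (-n) = 1 := by
  rw [← T_add, add_neg_cancel, T_zero]

theorem T2e : (T 2 : LaurentPolynomial ℤ) = T 1 * T 1 := by
  rw [show (2:ℤ) = 1 + 1 from rfl, T_add]

theorem T3e : (T 3 : LaurentPolynomial ℤ) = T 1 * T 1 * T 1 := by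
  rw [show (3:ℤ) = 1 + 1 + 1 from rfl, T_add, T_add]

theorem h3n (n : ℤ) : (T 1 - 1) * qint (3 - n) = T 1 * T 1 * T 1 * T (-n) - 1 := by
  have := qk (3 - n)
  rwa [T_sub 3 n, T3e] at this

theorem hn1 (n : ℤ) : (T 1 - 1) * qint (n + 1) = T n * T 1 - 1 := by
  have := qk (n + 1); rwa [T_add n 1] at this

theorem h2n (n : ℤ) : (T 1 - 1) * qint (2 - n) = T 1 * T 1 * T (-n) - 1 := by
  have := qk (2 - n)
  rwa [T_sub 2 n, T2e] at this

theorem hkap : (T (-1) : LaurentPolynomial ℤ) * (T 2 + T 1 + 1) = T 1 + 1 + T (-1) := by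
  rw [T2e]
  linear_combination (T 1 + 1) * ett

theorem detA (n : ℤ) : (Aq n).det = 1 := by
  have hqn := qk n
  have h3n := h3n n
  have ett := ett
  have eyz := eyz n
  have H : (T 1 - 1) * ((T 1 - 1) * (Aq n).det) = (T 1 - 1) * ((T 1 - 1) * 1) := by
    simp only [Aq, Matrix.det_fin_two_of]
    simp only [T_sub, T2e]
    linear_combination (T 1 * T (-n) * qint (3-n) - T 1 * T 1 * T (-n) * qint (3-n) - T 1 * T 1 * T (-1) * T (-n) * qint (3-n) + T 1 * T 1 * T 1 * T (-1) * T (-n) * qint (3-n)) * hqn + (T 1 * T (-n) - T 1 * T n * T (-n) - T 1 * T 1 * T (-1) * T (-n) + T 1 * T 1 * T (-1) * T n * T (-n)) * h3n + (T n * T (-n) + T 1 * T (-n) + (-3) * T 1 * T n * T (-n) + T 1 * T 1 * T n * T (-n) - T 1 * T 1 * T 1 * T 1 * T (-n) * T (-n) + T 1 * T 1 * T 1 * T 1 * T n * T (-n) * T (-n)) * ett + (1 + (-2) * T 1 + T 1 * T 1) * eyz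
  exact mul_left_cancel₀ qsub1_ne (mul_left_cancel₀ qsub1_ne H)

theorem trA (n : ℤ) : Matrix.trace (Aq n) = T 1 + 1 + T (-1) := by
  have hqn := qk n
  have h3n := h3n n
  have ett := ett
  have eyz := eyz n
  have H : (T 1 - 1) * ((T 1 - 1) * Matrix.trace (Aq n)) =
      (T 1 - 1) * ((T 1 - 1) * (T 1 + 1 + T (-1))) := by
    simp only [Aq, Matrix.trace_fin_two_of]
    simp only [T_sub, T2e]
    linear_combination (-T 1 * T 1 * T (-n) + T 1 * T 1 * T 1 * T (-n)) * hqn + (-T (-1) + T 1 * T (-1)) * h3n + (1 - T 1 - T 1 * T 1 * T (-n) + T 1 * T 1 * T 1 * T (-n)) * ett + (-T 1 * T 1 + T 1 * T 1 * T 1) * eyz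
  exact mul_left_cancel₀ qsub1_ne (mul_left_cancel₀ qsub1_ne H)

theorem trB (n : ℤ) : Matrix.trace (Bq n) = (T 1 + 1 + T (-1)) * (T 1 + T (-1)) := by
  have hqn := qk n
  have h3n := h3n n
  have hn1 := hn1 n
  have h2n := h2n n
  have ett := ett
  have eyz := eyz n
  have H : (T 1 - 1) * ((T 1 - 1) * Matrix.trace (Bq n)) =
      (T 1 - 1) * ((T 1 - 1) * ((T 1 + 1 + T (-1)) * (T 1 + T (-1)))) := by
    simp only [Bq, Aq, Matrix.mul_fin_two, Matrix.trace_fin_two_of]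
    simp only [show (2:ℤ) - (n+1) = 1 - n from by ring, show (1:ℤ) - (n+1) = -n from by ring,
      show (3:ℤ) - (n+1) = 2 - n from by ring, show (n+1) - 1 = n from by ring]
    simp only [T_sub, T2e]
    linear_combination (-T (-n) * qint (3-n) + T 1 * T (-n) * qint (3-n) - T 1 * T 1 * T 1 * T (-n) * T (-n) * qint (n+1) + T 1 * T 1 * T 1 * T 1 * T (-n) * T (-n) * qint (n+1)) * hqn + (-T (-n) + T n * T (-n) - T (-1) * T (-1) * qint (2-n) + T 1 * T (-1) * T (-1) * qint (2-n)) * h3n + (-T 1 * T (-n) * qint (2-n) + T 1 * T 1 * T (-n) * qint (2-n) - T 1 * T 1 * T 1 * T (-n) * T (-n) + T 1 * T 1 * T 1 * T n * T (-n) * T (-n)) * hn1 + (-T (-1) * T (-1) - T 1 * T (-n) + T 1 * T 1 * T n * T (-n) + T 1 * T 1 * T 1 * T (-1) * T (-1) * T (-n)) * h2n + (-1 - T (-n) + (2) * T n * T (-n) + (2) * T (-1) + (3) * T 1 - T 1 * T (-n) - T 1 * T n * T (-n) - T 1 * T (-1) - T 1 * T (-1) * T (-n) + (-2) * T 1 *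 T 1 - T 1 * T 1 * T (-1) * T (-n) + T 1 * T 1 * T 1 * T (-n) * T (-n) + T 1 * T 1 * T 1 * T 1 * T (-1) * T (-n) * T (-n)) * ett + (1 - T (-1) + (-2) * T 1 + T 1 * T 1 - T 1 * T 1 * T 1 + T 1 * T 1 * T 1 * T 1 + T 1 * T 1 * T 1 * T 1 * T n * T (-n)) * eyz
  exact mul_left_cancel₀ qsub1_ne (mul_left_cancel₀ qsub1_ne H)

theorem trMMN {R : Type*} [CommRing R] (M N : Matrix (Fin 2) (Fin 2) R) :
    Matrix.trace (M * M * N) =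
      Matrix.trace M * Matrix.trace (M * N) - M.det * Matrix.trace N := by
  simp only [Matrix.trace_fin_two, Matrix.mul_apply, Matrix.det_fin_two, Fin.sum_univ_two]
  ring

theorem trMNN {R : Type*} [CommRing R] (M N : Matrix (Fin 2) (Fin 2) R) :
    Matrix.trace (M * N * N) =
      Matrix.trace (M * N) * Matrix.trace N - N.det * Matrix.trace M := by
  simp only [Matrix.trace_fin_two, Matrix.mul_apply, Matrix.det_fin_two, Fin.sum_univ_two]
  ring

theorem ev1_markov {a b c : LaurentPolynomial ℤ} (h : qMarkovEq a b c) :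
    ev1 a ^ 2 + ev1 b ^ 2 + ev1 c ^ 2 = 3 * (ev1 a * ev1 b * ev1 c) := by
  have := congrArg ev1 h
  simp only [map_add, map_mul, map_pow, map_sub, map_one, ev1_T] at this
  linarith

def Inv (p : Matrix (Fin 2) (Fin 2) (LaurentPolynomial ℤ) ×
    Matrix (Fin 2) (Fin 2) (LaurentPolynomial ℤ)) : Prop :=
  p.1.det = 1 ∧ p.2.det = 1 ∧ ∃ a b c : LaurentPolynomial ℤ,
    Matrix.trace p.1 = (T 1 + 1 + T (-1)) * a ∧
    Matrix.trace p.2 = (T 1 + 1 + T (-1)) * b ∧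
    Matrix.trace (p.1 * p.2) = (T 1 + 1 + T (-1)) * c ∧
    qMarkovTriple a b c

theorem inv_step (p : Matrix (Fin 2) (Fin 2) (LaurentPolynomial ℤ) ×
    Matrix (Fin 2) (Fin 2) (LaurentPolynomial ℤ)) (bl : Bool) (h : Inv p) :
    Inv (if bl then (p.1 * p.2, p.2) else (p.1, p.1 * p.2)) := by
  obtain ⟨d1, d2, a, b, c, h1, h2, h3, heq, ha, hb, hc⟩ := h
  have meq := ev1_markov heq
  have heq' := heq
  rw [qMarkovEq, hkap] at heq'
  cases bl with
  | false =>
    rw [if_neg Bool.false_ne_true]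
    refine ⟨d1, by rw [Matrix.det_mul, d1, d2, mul_one], a, c, (T 1 + 1 + T (-1)) * a * c - b,
      h1, h3, ?_, ?_, ha, hc, ?_⟩
    · rw [← Matrix.mul_assoc, trMMN, h1, h2, h3, d1]; ring
    · rw [qMarkovEq, hkap]
      linear_combination heq'
    · have e : ev1 ((T 1 + 1 + T (-1)) * a * c - b) = 3 * ev1 a * ev1 c - ev1 b := by
        simp only [map_sub, map_mul, map_add, map_one, ev1_T]; ring
      rw [e]
      nlinarith [meq, mul_pos ha ha, mul_pos hc hc, hb, ha, hc]
  | true =>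
    rw [if_pos rfl]
    refine ⟨by rw [Matrix.det_mul, d1, d2, mul_one], d2, c, b, (T 1 + 1 + T (-1)) * c * b - a,
      h3, h2, ?_, ?_, hc, hb, ?_⟩
    · rw [trMNN, h3, h2, h1, d2]; ring
    · rw [qMarkovEq, hkap]
      linear_combination heq'
    · have e : ev1 ((T 1 + 1 + T (-1)) * c * b - a) = 3 * ev1 c * ev1 b - ev1 a := by
        simp only [map_sub, map_mul, map_add, map_one, ev1_T]; ring
      rw [e]
      nlinarith [meq, mul_pos hc hc, mul_pos hb hb, ha, hb, hc]

theorem inv_foldl (u : List Bool) (p : Matrix (Fin 2) (Fin 2) (LaurentPolynomial ℤ) ×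
    Matrix (Fin 2) (Fin 2) (LaurentPolynomial ℤ)) (h : Inv p) :
    Inv (u.foldl (fun p b => if b then (p.1 * p.2, p.2) else (p.1, p.1 * p.2)) p) := by
  induction u generalizing p with
  | nil => exact h
  | cons bl us ih =>
    rw [List.foldl_cons]
    exact ih _ (inv_step p bl h)

theorem inv_base (n : ℤ) : Inv (Aq n, Bq n) := by
  have ett := ett
  refine ⟨detA n, by rw [Bq, Matrix.det_mul, detA, detA, mul_one],
    1, T 1 + T (-1), (T 1 + 1 + T (-1)) * (T 1 + T (-1)) - 1,
    by rw [trA, mul_one], trB n, ?_, ?_, ?_, ?_, ?_⟩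
  · show Matrix.trace (Aq n * Bq n) = _
    rw [Bq, ← Matrix.mul_assoc, trMMN, trA, trA, ← Bq, trB, detA]
    ring
  · rw [qMarkovEq, hkap]
    linear_combination -ett
  · rw [show ev1 1 = 1 from map_one ev1]; norm_num
  · simp only [map_add, ev1_T]; norm_num
  · simp only [map_sub, map_mul, map_add, map_one, ev1_T]; norm_num

/-- The traces of the Cohn matrices at any vertex of the tree are
`(q + 1 + q⁻¹)` times the entries of a `q`-Markov triple. -/
theorem trace_P_qMarkovTriple (n : ℤ) (u : List Bool) :
    ∃ a b c : LaurentPolynomial ℤ,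
      Matrix.trace (P n u).1 = (T 1 + 1 + T (-1)) * a ∧
      Matrix.trace (P n u).2 = (T 1 + 1 + T (-1)) * b ∧
      Matrix.trace ((P n u).1 * (P n u).2) = (T 1 + 1 + T (-1)) * c ∧
      qMarkovTriple a b c := by
  have key : Inv (P n u) := by
    rw [P]
    exact inv_foldl u (Aq n, Bq n) (inv_base n)
  obtain ⟨-, -, a, b, c, h1, h2, h3, ht⟩ := key
  exact ⟨a, b, c, h1, h2, h3, ht⟩

end QMarkovPaper
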